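/- arXiv:1909.12738 — 2 statements merged into one kernel-verified Lean document; each statement's English description precedes it below -/
import Mathlib

section
/- Valid firings of a DAW-net correspond exactly to transitions of its PDDL encoding: (1) if (M,η) →t (M',η') is a valid firing of W, then there is a ground instance a_t of the action template α_t such that (Ψ(M,η), a_t, Ψ(M',η')) is in the state-transition function γ of the planning domain PDDL(W); and (2) conversely, if (s, a_t, s') ∈ γ for some ground instance a_t of α_t, then Ψ⁻¹(s) →t Ψ⁻¹(s') is a valid firing of W. -/
/-- Terms of the guard language: variables or constants. -/
inductive GTerm (V O : Type) where
  | var (v : V)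
  | const (o : O)

/-- Guards of the DAW-net guard language. -/
inductive Guard (V O : Type) where
  | tru
  | defd (v : V)
  | eq (v : V) (t : GTerm V O)
  | le (t1 t2 : GTerm V O)
  | not (g : Guard V O)
  | and (g1 g2 : Guard V O)

/-- Evaluation of a term under a (partial) assignment. -/
def evalT {V O : Type} (η : V → Option O) : GTerm V O → Option O
  | .var v => η v
  | .const o => some o

/-- DAW-net semantics of guards. -/
def gsat {V O : Type} (rel : O → O → Prop) (η : V → Option O) : Guard V O → Prop
  | .tru => True
  | .defd v => (η v).isSome
  | .eq v t => ∃ o, η v = some o ∧ evalT η t = some o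
  | .le t1 t2 => ∃ o1 o2, evalT η t1 = some o1 ∧ evalT η t2 = some o2 ∧ rel o1 o2
  | .not g => ¬ gsat rel η g
  | .and g1 g2 => gsat rel η g1 ∧ gsat rel η g2

/-- PDDL precondition formulas. -/
inductive PForm (V O : Type) where
  | tru
  | eqNull (v : V)
  | eqAtom (v : V) (t : GTerm V O)
  | ordAtom (t1 t2 : GTerm V O)
  | not (f : PForm V O)
  | and (f1 f2 : PForm V O)

/-- Translation of guards into PDDL preconditions. -/
def transG {V O : Type} : Guard V O → PForm V O
  | .tru => .tru
  | .defd v => .not (.eqNull v)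
  | .eq v t => .and (.not (.eqNull v)) (.eqAtom v t)
  | .le t1 t2 => .ordAtom t1 t2
  | .not g => .not (transG g)
  | .and g1 g2 => .and (transG g1) (transG g2)

/-- Satisfaction of PDDL preconditions in a planning state. -/
def psat {V O : Type} (rel : O → O → Prop) (s : V → Option O) : PForm V O → Prop
  | .tru => True
  | .eqNull v => s v = none
  | .eqAtom v t => s v = evalT s t
  | .ordAtom t1 t2 => ∃ o1 o2, evalT s t1 = some o1 ∧ evalT s t2 = some o2 ∧ rel o1 o2
  | .not f => ¬ psat rel s f
  | .and f1 f2 => psat rel s f1 ∧ psat rel s f2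

/-- A DAW-net with syntactic guards. -/
structure DAWNet (P T V O : Type) where
  pre : T → Set P
  post : T → Set P
  wr : T → V → Option (Set O)
  gd : T → Guard V O

/-- Valid firing of a transition in a 1-safe DAW-net (the marking update is the
simplified one valid under the 1-safety assumption: output places get exactly one
token). -/
def ValidFiring {P T V O : Type} (rel : O → O → Prop) (W : DAWNet P T V O)
    (M : P → ℕ) (η : V → Option O) (t : T) (M' : P → ℕ) (η' : V → Option O) : Prop :=
  (∀ p ∈ W.pre t, 0 < M p) ∧
  gsat rel η (W.gd t) ∧
  (∀ p, (p ∈ W.pre t ∧ p ∉ W.post t → M' p = 0) ∧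
        (p ∈ W.post t → M' p = 1) ∧
        (p ∉ W.pre t ∧ p ∉ W.post t → M' p = M p)) ∧
  (∀ v (s : Set O), W.wr t v = some s →
      (s = ∅ → η' v = none) ∧ (s.Nonempty → ∃ o ∈ s, η' v = some o)) ∧
  (∀ v, W.wr t v = none → η' v = η v)

/-- Planning states: a boolean per place and a value (possibly `null = none`) per
variable. -/
abbrev PState (P V O : Type) := (P → Bool) × (V → Option O)

/-- The parameters `z` of a ground instance of the action template `α_t` : one value per
written variable, taken from the rigid relation `wr_{t,v}` (which is `wr t v` if
nonempty and `{null}` if `t` deletes `v`); parameters of unmentioned variables are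
normalized to `null`. -/
def groundOk {P T V O : Type} (W : DAWNet P T V O) (t : T) (z : V → Option O) : Prop :=
  (∀ v (s : Set O), W.wr t v = some s →
      (s.Nonempty → ∃ o ∈ s, z v = some o) ∧ (s = ∅ → z v = none)) ∧
  (∀ v, W.wr t v = none → z v = none)

/-- The state-transition function `γ` of the planning domain `PDDL(W)` : `PlanStep rel W
s t z s'` holds iff the ground action of `α_t` with parameters `z` is applicable in `s`
(precondition: translated guard, parameter ranges, tokens in the input places) and `s'`
results from applying its effects to `s`. -/
def PlanStep {P T V O : Type} (rel : O → O → Prop) (W : DAWNet P T V O)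
    (s : PState P V O) (t : T) (z : V → Option O) (s' : PState P V O) : Prop :=
  groundOk W t z ∧
  psat rel s.2 (transG (W.gd t)) ∧
  (∀ p ∈ W.pre t, s.1 p = true) ∧
  (∀ v, (W.wr t v ≠ none → s'.2 v = z v) ∧ (W.wr t v = none → s'.2 v = s.2 v)) ∧
  (∀ p, (p ∈ W.pre t ∧ p ∉ W.post t → s'.1 p = false) ∧
        (p ∈ W.post t → s'.1 p = true) ∧
        (p ∉ W.pre t ∧ p ∉ W.post t → s'.1 p = s.1 p))

/-- The map `Ψ` from DAW-net states to planning states. -/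
def PsiS {P V O : Type} (M : P → ℕ) (η : V → Option O) : PState P V O :=
  (fun p => decide (0 < M p), η)

/-- The inverse of `Ψ` on markings (for 1-safe nets). -/
def invM {P V O : Type} (s : PState P V O) : P → ℕ := fun p => if s.1 p then 1 else 0

/-!
`Ψ` is the identity on variables and reads a marking as its support. The firing rule and
the effects of `α_t` update markings by the same three-case rule (inputs emptied, outputs
filled, the rest untouched), so each transports to the other along `n ↦ decide (0 < n)`
and `b ↦ if b then 1 else 0`. A firing is matched by the ground action whose parameters are
the new values of the written variables, and guards transfer by query preservation.
-/

section

variable {P T V O : Type}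

theorem gsat_iff_psat_transG (rel : O → O → Prop) (η : V → Option O) (g : Guard V O) :
    gsat rel η g ↔ psat rel η (transG g) := by
  induction g with
  | tru | le | defd => simp [gsat, transG, psat, Option.isSome_iff_ne_none]
  | eq v t =>
    simp only [gsat, transG, psat]
    constructor
    · rintro ⟨o, hv, ht⟩
      exact ⟨by simp [hv], hv.trans ht.symm⟩
    · rintro ⟨hv, ht⟩
      obtain ⟨o, ho⟩ := Option.ne_none_iff_exists'.mp hv
      exact ⟨o, ho, ht ▸ ho⟩
  | not g ih => simp only [gsat, transG, psat, ih]
  | and g₁ g₂ ih₁ ih₂ => simp only [gsat, transG, psat, ih₁, ih₂]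

def MarkingUpdate {β : Type} (pre post : Set P) (off on : β) (m m' : P → β) : Prop :=
  ∀ p, (p ∈ pre ∧ p ∉ post → m' p = off) ∧ (p ∈ post → m' p = on) ∧
    (p ∉ pre ∧ p ∉ post → m' p = m p)

theorem MarkingUpdate.comp {β γ : Type} {pre post : Set P} {off on : β} {m m' : P → β}
    (h : MarkingUpdate pre post off on m m') (f : β → γ) :
    MarkingUpdate pre post (f off) (f on) (f ∘ m) (f ∘ m') := fun p =>
  ⟨fun hp => congrArg f ((h p).1 hp), fun hp => congrArg f ((h p).2.1 hp),
    fun hp => congrArg f ((h p).2.2 hp)⟩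

theorem groundOk_of_validFiring_wr {W : DAWNet P T V O} {t : T} {η' : V → Option O}
    (hwr : ∀ v (s : Set O), W.wr t v = some s →
      (s = ∅ → η' v = none) ∧ (s.Nonempty → ∃ o ∈ s, η' v = some o)) :
    groundOk W t (fun v => if W.wr t v = none then none else η' v) := by
  refine ⟨fun v s hs => ?_, fun v hv => if_pos hv⟩
  simp only [hs, reduceCtorEq, if_false]
  exact (hwr v s hs).symm

theorem validFiring_wr_of_groundOk {W : DAWNet P T V O} {t : T} {z η' : V → Option O}
    (hz : groundOk W t z) (hη' : ∀ v, W.wr t v ≠ none → η' v = z v) (v : V) (s : Set O)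
    (hs : W.wr t v = some s) :
    (s = ∅ → η' v = none) ∧ (s.Nonempty → ∃ o ∈ s, η' v = some o) := by
  rw [hη' v (by simp [hs])]
  exact (hz.1 v s hs).symm

end

/-- Valid firings of a 1-safe DAW-net correspond exactly to transitions of its PDDL
encoding: (1) every valid firing is matched by a ground action of the corresponding
action template between the `Ψ`-images of the states; (2) every `γ`-transition along a
ground action of `α_t` is matched by a valid firing of `t` between the `Ψ⁻¹`-images. -/
theorem firing_iff_plan_step {P T V O : Type} (rel : O → O → Prop)
    (W : DAWNet P T V O) :
    (∀ (M : P → ℕ) (η : V → Option O) (t : T) (M' : P → ℕ) (η' : V → Option O),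
      (∀ p, M p ≤ 1) → ValidFiring rel W M η t M' η' →
      ∃ z, PlanStep rel W (PsiS M η) t z (PsiS M' η')) ∧
    (∀ (s s' : PState P V O) (t : T) (z : V → Option O),
      PlanStep rel W s t z s' →
      ValidFiring rel W (invM s) s.2 t (invM s') s'.2) := by
  constructor
  · rintro M η t M' η' - ⟨hpre, hgd, hmark, hwr, hkeep⟩
    exact ⟨_, groundOk_of_validFiring_wr hwr, (gsat_iff_psat_transG rel η _).1 hgd,
      fun p hp => decide_eq_true (hpre p hp),
      fun v => ⟨fun hv => (if_neg hv).symm, hkeep v⟩,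
      MarkingUpdate.comp hmark fun n => decide (0 < n)⟩
  · rintro s s' t z ⟨hz, hgd, hpre, hvar, hmark⟩
    exact ⟨fun p hp => by simp [invM, hpre p hp], (gsat_iff_psat_transG rel s.2 _).2 hgd,
      MarkingUpdate.comp hmark fun b => if b then 1 else 0,
      validFiring_wr_of_groundOk hz fun v hv => (hvar v).1 hv, fun v => (hvar v).2⟩
end

section
/- Trace equivalence of the DAW-net reachability graph with the PDDL transition system: for any 1-safe DAW-net W, the reachability graph RG_W and the transition system TS_{PDDL(W)} derived from the planning encoding are trace equivalent via the mapping that sends states through Ψ and transitions to themselves; i.e., every path of RG_W maps to a path of TS_{PDDL(W)}, and every path of TS_{PDDL(W)} arises as the image of a path of RG_W. -/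
/-- Paths of the reachability graph `RG_W` from the initial state `init`, recorded as
the list of successive (transition, reached state) pairs. -/
inductive RGPath {P T V O : Type} (rel : O → O → Prop) (W : DAWNet P T V O)
    (init : (P → ℕ) × (V → Option O)) :
    ((P → ℕ) × (V → Option O)) → List (T × (P → ℕ) × (V → Option O)) → Prop
  | nil : RGPath rel W init init []
  | cons {s : (P → ℕ) × (V → Option O)} {l : List (T × (P → ℕ) × (V → Option O))}
      {t : T} {M' : P → ℕ} {η' : V → Option O} :
      RGPath rel W init s l → ValidFiring rel W s.1 s.2 t M' η' →
      RGPath rel W init (M', η') (l ++ [(t, M', η')])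

/-- Paths of the transition system `TS_{PDDL(W)}` from the initial planning state. -/
inductive TSPath {P T V O : Type} (rel : O → O → Prop) (W : DAWNet P T V O)
    (init : PState P V O) : PState P V O → List (T × PState P V O) → Prop
  | nil : TSPath rel W init init []
  | cons {s : PState P V O} {l : List (T × PState P V O)} {t : T} {s' : PState P V O} :
      TSPath rel W init s l → (∃ z, PlanStep rel W s t z s') →
      TSPath rel W init s' (l ++ [(t, s')])

/-!
Ψ forgets the token counts of a marking except for their positivity, which loses nothing on
1-safe markings, and a guard holds in a DAW-net state exactly when its PDDL translation holds
in the image under Ψ. So each valid firing is a γ-step between the Ψ-images (the ground action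
fixes the written variables to their new values and the others to `none`), and conversely each
γ-step out of the Ψ-image of a 1-safe state is the image of a valid firing to a 1-safe state,
namely the one whose marking counts the places marked `true`. Trace equivalence follows by
induction on paths, the 1-safety of the initial marking starting the backward induction.
-/

lemma psat_transG_iff {V O : Type} (rel : O → O → Prop) (η : V → Option O) (g : Guard V O) :
    psat rel η (transG g) ↔ gsat rel η g := by
  induction g with
  | tru | le => exact Iff.rfl
  | defd v => simp [transG, psat, gsat, Option.isSome_iff_ne_none]
  | eq v t => cases h : η v <;> simp [transG, psat, gsat, h, eq_comm]
  | not g ih => exact not_congr ih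
  | and g₁ g₂ ih₁ ih₂ => exact and_congr ih₁ ih₂

section

variable {P T V O : Type} {rel : O → O → Prop} {W : DAWNet P T V O}

lemma psiS_toNat (b : P → Bool) (η : V → Option O) : PsiS (fun p => (b p).toNat) η = (b, η) := by
  refine Prod.ext (funext fun p => ?_) rfl
  show decide (0 < (b p).toNat) = b p
  cases b p <;> rfl

lemma toNat_decide_pos {n : ℕ} (hn : n ≤ 1) : (decide (0 < n)).toNat = n := by
  interval_cases n <;> rfl

lemma ValidFiring.exists_planStep {M M' : P → ℕ} {η η' : V → Option O} {t : T}
    (h : ValidFiring rel W M η t M' η') : ∃ z, PlanStep rel W (PsiS M η) t z (PsiS M' η') := by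
  classical
  obtain ⟨hpre, hgd, hmark, hwr, hkeep⟩ := h
  refine ⟨fun v => if W.wr t v = none then none else η' v, ⟨fun v s hs => ?_, fun v hv => ?_⟩,
    (psat_transG_iff rel η _).mpr hgd, fun p hp => by simpa [PsiS] using hpre p hp,
    fun v => ⟨fun hv => by simp [PsiS, hv], fun hv => hkeep v hv⟩, fun p => ?_⟩
  · simpa [hs] using (hwr v s hs).symm
  · simp [hv]
  · obtain ⟨hdel, hadd, hfix⟩ := hmark p
    exact ⟨fun hp => by simp [PsiS, hdel hp], fun hp => by simp [PsiS, hadd hp],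
      fun hp => by simp [PsiS, hfix hp]⟩

lemma PlanStep.validFiring {M : P → ℕ} {η : V → Option O} {t : T} {z : V → Option O}
    {s' : PState P V O} (hM : ∀ p, M p ≤ 1) (h : PlanStep rel W (PsiS M η) t z s') :
    ValidFiring rel W M η t (fun p => (s'.1 p).toNat) s'.2 := by
  obtain ⟨⟨hground, -⟩, hgd, hpre, hwr, hmark⟩ := h
  refine ⟨fun p hp => by simpa [PsiS] using hpre p hp, (psat_transG_iff rel η _).mp hgd,
    fun p => ?_, fun v s hs => ?_, fun v hv => (hwr v).2 hv⟩
  · obtain ⟨hdel, hadd, hfix⟩ := hmark p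
    refine ⟨fun hp => by simp [hdel hp], fun hp => by simp [hadd hp], fun hp => ?_⟩
    show (s'.1 p).toNat = M p
    rw [hfix hp]
    exact toNat_decide_pos (hM p)
  · rw [(hwr v).1 (by simp [hs])]
    exact (hground v s hs).symm

lemma RGPath.tsPath_map_psiS {init s : (P → ℕ) × (V → Option O)}
    {l : List (T × (P → ℕ) × (V → Option O))} (h : RGPath rel W init s l) :
    TSPath rel W (PsiS init.1 init.2) (PsiS s.1 s.2) (l.map fun x => (x.1, PsiS x.2.1 x.2.2)) := by
  induction h with
  | nil => exact .nil
  | cons _ hfire ih =>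
    rw [List.map_append]
    exact .cons ih hfire.exists_planStep

lemma TSPath.exists_rgPath {init : (P → ℕ) × (V → Option O)} (hinit : ∀ p, init.1 p ≤ 1)
    {s' : PState P V O} {l' : List (T × PState P V O)}
    (h : TSPath rel W (PsiS init.1 init.2) s' l') :
    ∃ (s : (P → ℕ) × (V → Option O)) (l : List (T × (P → ℕ) × (V → Option O))),
      RGPath rel W init s l ∧ (∀ p, s.1 p ≤ 1) ∧ PsiS s.1 s.2 = s' ∧
        (l.map fun x => (x.1, PsiS x.2.1 x.2.2)) = l' := by
  induction h with
  | nil => exact ⟨init, [], .nil, hinit, rfl, rfl⟩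
  | @cons _ _ t s' _ hstep ih =>
    obtain ⟨s, l, hpath, hsafe, rfl, rfl⟩ := ih
    obtain ⟨z, hz⟩ := hstep
    refine ⟨(fun p => (s'.1 p).toNat, s'.2), l ++ [(t, fun p => (s'.1 p).toNat, s'.2)],
      .cons hpath (hz.validFiring hsafe), fun p => Bool.toNat_le _, psiS_toNat _ _, ?_⟩
    simp [psiS_toNat]

end

/-- Trace equivalence of the DAW-net reachability graph with the PDDL transition system:
for a 1-safe DAW-net `W` (initial state: one token in `start`, empty assignment), every
path of `RG_W` maps under `Ψ` (identity on transition labels) to a path of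
`TS_{PDDL(W)}`, and every path of `TS_{PDDL(W)}` arises as the image of a path of
`RG_W`. -/
theorem rg_pddl_trace_equivalent {P T V O : Type} (rel : O → O → Prop)
    (W : DAWNet P T V O) (start : P) (M0 : P → ℕ)
    (hM0 : M0 start = 1 ∧ ∀ p, p ≠ start → M0 p = 0) :
    (∀ (s : (P → ℕ) × (V → Option O)) (l : List (T × (P → ℕ) × (V → Option O))),
      RGPath rel W (M0, fun _ => none) s l →
      TSPath rel W (PsiS M0 (fun _ => none)) (PsiS s.1 s.2)
        (l.map fun x => (x.1, PsiS x.2.1 x.2.2))) ∧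
    (∀ (s' : PState P V O) (l' : List (T × PState P V O)),
      TSPath rel W (PsiS M0 (fun _ => none)) s' l' →
      ∃ (s : (P → ℕ) × (V → Option O)) (l : List (T × (P → ℕ) × (V → Option O))),
        RGPath rel W (M0, fun _ => none) s l ∧ PsiS s.1 s.2 = s' ∧
        (l.map fun x => (x.1, PsiS x.2.1 x.2.2)) = l') := by
  have hsafe : ∀ p, M0 p ≤ 1 := fun p => by
    by_cases hp : p = start
    · exact (hp ▸ hM0.1).le
    · exact (hM0.2 p hp).le.trans zero_le_one
  refine ⟨fun _ _ h => h.tsPath_map_psiS, fun _ _ h => ?_⟩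
  obtain ⟨s, l, hpath, -, hs, hl⟩ := h.exists_rgPath (init := (M0, _)) hsafe
  exact ⟨s, l, hpath, hs, hl⟩
end
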